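/- arXiv:1304.6862 — 2 statements merged into one kernel-verified Lean document; each statement's English description precedes it below -/
import Mathlib

section
/- Let X be a set carrying an approach distance with ultrafilter convergence a. Then X is exponentiable in the category App of approach spaces and contractions if and only if the numerical relation d : U([0,∞]^X) ⇸ [0,∞]^X defined by d(𝔭,φ) = inf {u ∈ ℝ≥0∞ | ∀ 𝔮 ∈ U([0,∞]^X × X) with U π₁ 𝔮 = 𝔭 and ∀ x ∈ X, max u (a (U π₂ 𝔮) x) + ξ(U ev 𝔮) ≥ φ x} is transitive (so that [0,∞]^X with d is itself an approach space). -/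
open scoped ENNReal
open CategoryTheory

noncomputable section

/-- The extension `Ū r` of a numerical relation `r : X ⇸ Y` to ultrafilters:
`Ū r (𝔵, 𝔶) = ⨆_{A ∈ 𝔵} ⨆_{B ∈ 𝔶} ⨅_{x ∈ A} ⨅_{y ∈ B} r x y`. -/
def uExt {X Y : Type*} (r : X → Y → ℝ≥0∞) (𝔵 : Ultrafilter X) (𝔶 : Ultrafilter Y) : ℝ≥0∞ :=
  ⨆ A ∈ 𝔵, ⨆ B ∈ 𝔶, ⨅ x ∈ A, ⨅ y ∈ B, r x y

/-- The multiplication `m_X : U (U X) → U X` of the ultrafilter monad: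
`m_X 𝔛 = {A ⊆ X | {𝔞 ∈ U X | A ∈ 𝔞} ∈ 𝔛}`. -/
def mU {X : Type*} (𝔛 : Ultrafilter (Ultrafilter X)) : Ultrafilter X :=
  𝔛.bind id

/-- `ξ : U [0,∞] → [0,∞]`, `ξ 𝔳 = ⨆_{A ∈ 𝔳} ⨅_{u ∈ A} u`. -/
def xi (𝔳 : Ultrafilter ℝ≥0∞) : ℝ≥0∞ :=
  ⨆ A ∈ 𝔳, ⨅ u ∈ A, u

/-- `δ : P X × X → [0,∞]` is an approach distance. -/
structure IsApproachDistance {X : Type*} (δ : Set X → X → ℝ≥0∞) : Prop where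
  dist_singleton : ∀ x : X, δ {x} x = 0
  dist_empty : ∀ x : X, δ (∅ : Set X) x = ∞
  dist_union : ∀ (A B : Set X) (x : X), δ (A ∪ B) x = min (δ A x) (δ B x)
  dist_closure : ∀ (A : Set X) (x : X) (ε : ℝ≥0∞), δ A x ≤ δ {y | δ A y ≤ ε} x + ε

/-- The ultrafilter convergence associated to a distance function `δ`:
`a 𝔵 x = ⨆_{A ∈ 𝔵} δ A x`. -/
def appConv {X : Type*} (δ : Set X → X → ℝ≥0∞) (𝔵 : Ultrafilter X) (x : X) : ℝ≥0∞ :=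
  ⨆ A ∈ 𝔵, δ A x

/-- `f : X → Y` is a contraction with respect to convergences `a` and `b`:
`a 𝔵 x ≥ b (U f 𝔵) (f x)`. -/
def IsContraction {X Y : Type*} (a : Ultrafilter X → X → ℝ≥0∞)
    (b : Ultrafilter Y → Y → ℝ≥0∞) (f : X → Y) : Prop :=
  ∀ (𝔵 : Ultrafilter X) (x : X), b (Ultrafilter.map f 𝔵) (f x) ≤ a 𝔵 x

/-- Objects of the category `App`: sets equipped with an approach distance. -/
structure AppSpace : Type 1 where
  carrier : Type
  dist : Set carrier → carrier → ℝ≥0∞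
  isApproachDistance : IsApproachDistance dist

/-- The category `App` of approach spaces and contractions. -/
instance : Category AppSpace where
  Hom A B := {f : A.carrier → B.carrier //
    IsContraction (appConv A.dist) (appConv B.dist) f}
  id A := ⟨fun x => x, fun 𝔵 x => by simp [Ultrafilter.map_id']⟩
  comp {A B C} f g := ⟨g.1 ∘ f.1, fun 𝔵 x => by
    calc appConv C.dist (Ultrafilter.map (g.1 ∘ f.1) 𝔵) (g.1 (f.1 x))
        = appConv C.dist (Ultrafilter.map g.1 (Ultrafilter.map f.1 𝔵)) (g.1 (f.1 x)) := by
          rw [Ultrafilter.map_map]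
      _ ≤ appConv B.dist (Ultrafilter.map f.1 𝔵) (f.1 x) := g.2 _ _
      _ ≤ appConv A.dist 𝔵 x := f.2 𝔵 x⟩

/-- `p : P ⟶ A`, `q : P ⟶ B` exhibit `P` as a (cartesian) product of `A` and `B` in `App`. -/
def IsProductCone {A B P : AppSpace} (p : P ⟶ A) (q : P ⟶ B) : Prop :=
  ∀ (W : AppSpace) (f : W ⟶ A) (g : W ⟶ B), ∃! h : W ⟶ P, h ≫ p = f ∧ h ≫ q = g

/-- An approach space `X` is exponentiable in `App` if the cartesian product functor
`(-) × X : App → App` (formalised as: some functor `F` equipped with natural projections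
exhibiting each `F Z` as the product `Z × X`) has a right adjoint. -/
def AppExponentiable (X : AppSpace) : Prop :=
  ∃ (F R : AppSpace ⥤ AppSpace) (_ : F ⊣ R)
    (p : ∀ Z : AppSpace, F.obj Z ⟶ Z) (q : ∀ Z : AppSpace, F.obj Z ⟶ X),
    (∀ Z : AppSpace, IsProductCone (p Z) (q Z)) ∧
    (∀ (Z W : AppSpace) (h : Z ⟶ W), F.map h ≫ p W = p Z ≫ h ∧ F.map h ≫ q W = q Z)

/-- The approach convergence on `[0,∞]`: `λ(𝔳, v) = v ⊖ ξ 𝔳` (truncated subtraction). -/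
def ennConv (𝔳 : Ultrafilter ℝ≥0∞) (v : ℝ≥0∞) : ℝ≥0∞ :=
  v - xi 𝔳

/-- The set `[0,∞]^X` of contractions `φ : X → [0,∞]`, for a convergence `a` on `X`. -/
def Contractions {X : Type*} (a : Ultrafilter X → X → ℝ≥0∞) : Type _ :=
  {φ : X → ℝ≥0∞ // IsContraction a ennConv φ}

/-- The evaluation map `ev : [0,∞]^X × X → [0,∞]`. -/
def evMap {X : Type*} (a : Ultrafilter X → X → ℝ≥0∞) : Contractions a × X → ℝ≥0∞ :=
  fun p => p.1.1 p.2

/-- The exponential convergence `d` on `[0,∞]^X`: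
`d(𝔭,φ) = inf {u | ∀ 𝔮 ∈ U([0,∞]^X × X) with U π₁ 𝔮 = 𝔭, ∀ x ∈ X,`
`u ∨ a (U π₂ 𝔮) x + ξ (U ev 𝔮) ≥ φ x}`. -/
def dExp {X : Type*} (a : Ultrafilter X → X → ℝ≥0∞) :
    Ultrafilter (Contractions a) → Contractions a → ℝ≥0∞ :=
  fun 𝔭 φ => sInf {u : ℝ≥0∞ | ∀ 𝔮 : Ultrafilter (Contractions a × X),
    Ultrafilter.map Prod.fst 𝔮 = 𝔭 → ∀ x : X,
      φ.1 x ≤ max u (a (Ultrafilter.map Prod.snd 𝔮) x) + xi (Ultrafilter.map (evMap a) 𝔮)}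

/-- A convergence relation `a : U X ⇸ X` is transitive:
`Ū a 𝔛 𝔵 + a 𝔵 x ≥ a (m_X 𝔛) x`. -/
def IsTransitiveConv {X : Type*} (a : Ultrafilter X → X → ℝ≥0∞) : Prop :=
  ∀ (𝔛 : Ultrafilter (Ultrafilter X)) (𝔵 : Ultrafilter X) (x : X),
    a (mU 𝔛) x ≤ uExt a 𝔛 𝔵 + a 𝔵 x

/-- A convergence relation `a : U X ⇸ X` is reflexive: `a (e_X x) x = 0`. -/
def IsReflexiveConv {X : Type*} (a : Ultrafilter X → X → ℝ≥0∞) : Prop :=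
  ∀ x : X, a (pure x : Ultrafilter X) x = 0

/-!
Approach spaces are the same as reflexive, transitive ultrafilter convergences, and products
carry the convergence `prodConv`. For any target `Z`, the convergence `expConv` on the
contractions `X → Z` is reflexive and functorial in `Z`, and currying and uncurrying preserve
contractions; so `X` is exponentiable as soon as all these convergences are transitive. Every
approach space is initial with respect to the maps `δ A : Z → [0,∞]`, hence transitivity for
`Z = [0,∞]`, i.e. of `dExp`, gives transitivity for every `Z`.

Conversely, let `(-) × X ⊣ R`. Currying the counit identifies the points of `R Z` with the
contractions `X → Z` (injectivity: test against the one-point space). To see that under this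
identification the convergence of `R Z` is `expConv`, test the adjunction against the space
`pointConv 𝔭 φ (expConv 𝔭 φ)`, the least reflexive convergence in which `𝔭` converges to `φ`
with value `expConv 𝔭 φ`; it is transitive. So `expConv` is the convergence of an approach
space, hence transitive.
-/

open Filter Set

section Ultrafilters

variable {α β γ : Type*}

lemma mem_mU {𝔛 : Ultrafilter (Ultrafilter α)} {s : Set α} :
    s ∈ mU 𝔛 ↔ {𝔞 : Ultrafilter α | s ∈ 𝔞} ∈ 𝔛 :=
  Iff.rfl

lemma mU_map_map (f : α → β) (𝔛 : Ultrafilter (Ultrafilter α)) :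
    mU (𝔛.map (Ultrafilter.map f)) = (mU 𝔛).map f :=
  rfl

lemma mU_pure (𝔵 : Ultrafilter α) : mU (pure 𝔵) = 𝔵 :=
  rfl

lemma Ultrafilter.map_congr {𝔵 : Ultrafilter α} {f g : α → β}
    (h : ∀ᶠ x in (𝔵 : Filter α), f x = g x) :
    𝔵.map f = 𝔵.map g :=
  Ultrafilter.coe_injective (Filter.map_congr h)

lemma Ultrafilter.map_const_eq_pure (𝔵 : Ultrafilter α) (b : β) :
    𝔵.map (fun _ => b) = pure b :=
  Ultrafilter.coe_injective Filter.map_const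

lemma Ultrafilter.eq_pure_of_singleton_mem {𝔵 : Ultrafilter α} {x : α} (h : {x} ∈ 𝔵) :
    𝔵 = pure x := by
  obtain ⟨y, rfl, h𝔵⟩ := Ultrafilter.eq_pure_of_finite_mem (Set.finite_singleton x) h
  exact h𝔵

lemma Ultrafilter.map_fst_map_prodMap (f : α → β) (𝔮 : Ultrafilter (α × γ)) :
    (𝔮.map (Prod.map f id)).map Prod.fst = (𝔮.map Prod.fst).map f := by
  simp only [Ultrafilter.map_map]
  rfl

lemma Ultrafilter.map_snd_map_prodMap (f : α → β) (𝔮 : Ultrafilter (α × γ)) :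
    (𝔮.map (Prod.map f id)).map Prod.snd = 𝔮.map Prod.snd := by
  rw [Ultrafilter.map_map]
  rfl

/-- `U` weakly preserves the pullback of `Prod.fst` along `g`. -/
lemma Ultrafilter.exists_map_fst_eq_and_map_prodMap_eq (g : α → β) (𝔭 : Ultrafilter α)
    (𝔮 : Ultrafilter (β × γ)) (h : 𝔮.map Prod.fst = 𝔭.map g) :
    ∃ 𝔯 : Ultrafilter (α × γ), 𝔯.map Prod.fst = 𝔭 ∧ 𝔯.map (Prod.map g id) = 𝔮 := by
  let F := Filter.comap Prod.fst (𝔭 : Filter α) ⊓ Filter.comap (Prod.map g id) (𝔮 : Filter (β × γ))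
  have : F.NeBot := by
    refine Filter.inf_neBot_iff.2 fun s hs t ht => ?_
    obtain ⟨P, hP, hPs⟩ := Filter.mem_comap.1 hs
    obtain ⟨Q, hQ, hQt⟩ := Filter.mem_comap.1 ht
    have hQ' : g ⁻¹' (Prod.fst '' Q) ∈ 𝔭 := by
      rw [← Ultrafilter.mem_map, ← h, Ultrafilter.mem_map]
      exact mem_of_superset hQ (subset_preimage_image _ _)
    obtain ⟨x, hxP, ⟨y, z⟩, hyzQ, hy⟩ := Ultrafilter.nonempty_of_mem (inter_mem hP hQ')
    refine ⟨(x, z), hPs hxP, hQt ?_⟩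
    change (g x, z) ∈ Q
    rwa [← hy]
  refine ⟨.of F, Ultrafilter.eq_of_le ?_, Ultrafilter.eq_of_le ?_⟩
  · exact map_le_iff_le_comap.2 ((Ultrafilter.of_le F).trans inf_le_left)
  · exact map_le_iff_le_comap.2 ((Ultrafilter.of_le F).trans inf_le_right)

end Ultrafilters

section Numerical

variable {α β α' β' : Type*}

lemma xi_pure (v : ℝ≥0∞) : xi (pure v) = v :=
  le_antisymm (iSup₂_le fun _ hA => iInf₂_le v hA) (le_iSup₂_of_le {v} rfl (by simp))

lemma Iic_mem_of_xi_lt {𝔳 : Ultrafilter ℝ≥0∞} {t : ℝ≥0∞} (h : xi 𝔳 < t) : Iic t ∈ 𝔳 := by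
  by_contra hs
  have hle : t ≤ ⨅ u ∈ (Iic t)ᶜ, u := le_iInf₂ fun _ (hu : ¬ _ ≤ t) => (lt_of_not_ge hu).le
  exact (hle.trans (le_iSup₂ (f := fun A (_ : A ∈ 𝔳) => ⨅ u ∈ A, u) _
    (Ultrafilter.compl_mem_iff_notMem.2 hs))).not_gt h

lemma le_add_of_forall_lt_le_add {c u v : ℝ≥0∞} (h : ∀ u', u < u' → c ≤ u' + v) :
    c ≤ u + v := by
  rcases eq_or_ne u ⊤ with rfl | hu
  · simp
  refine ENNReal.le_of_forall_pos_le_add fun ε hε _ => ?_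
  calc c ≤ u + ε + v := h _ (ENNReal.lt_add_right hu (by exact_mod_cast hε.ne'))
    _ = u + v + ε := add_right_comm _ _ _

lemma le_max_sInf {S : Set ℝ≥0∞} {c v : ℝ≥0∞} (h : ∀ u ∈ S, c ≤ max u v) :
    c ≤ max (sInf S) v := by
  rw [sInf_sup_eq]
  exact le_iInf₂ h

lemma iInf_le_uExt (r : α → β → ℝ≥0∞) {𝔵 : Ultrafilter α} {𝔶 : Ultrafilter β}
    {A : Set α} {B : Set β} (hA : A ∈ 𝔵) (hB : B ∈ 𝔶) :
    ⨅ x ∈ A, ⨅ y ∈ B, r x y ≤ uExt r 𝔵 𝔶 :=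
  le_iSup₂_of_le A hA (le_iSup₂_of_le (f := fun B (_ : B ∈ 𝔶) => ⨅ x ∈ A, ⨅ y ∈ B, r x y) B hB
    le_rfl)

lemma uExt_le {r : α → β → ℝ≥0∞} {𝔵 : Ultrafilter α} {𝔶 : Ultrafilter β} {u : ℝ≥0∞}
    (h : ∀ A ∈ 𝔵, ∀ B ∈ 𝔶, ⨅ x ∈ A, ⨅ y ∈ B, r x y ≤ u) : uExt r 𝔵 𝔶 ≤ u :=
  iSup₂_le fun A hA => iSup₂_le fun B hB => h A hA B hB

lemma exists_lt_of_uExt_lt {r : α → β → ℝ≥0∞} {𝔵 : Ultrafilter α} {𝔶 : Ultrafilter β}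
    {t : ℝ≥0∞} (h : uExt r 𝔵 𝔶 < t) {A : Set α} {B : Set β} (hA : A ∈ 𝔵) (hB : B ∈ 𝔶) :
    ∃ x ∈ A, ∃ y ∈ B, r x y < t := by
  simpa only [iInf_lt_iff, exists_prop] using (iInf_le_uExt r hA hB).trans_lt h

lemma le_uExt_pure_pure (r : α → β → ℝ≥0∞) (x : α) (y : β) :
    r x y ≤ uExt r (pure x) (pure y) := by
  refine le_trans ?_ (iInf_le_uExt r (A := {x}) (B := {y}) rfl rfl)
  simp

lemma uExt_map_map_le (f : α → α') (g : β → β') {r : α → β → ℝ≥0∞} {r' : α' → β' → ℝ≥0∞}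
    (h : ∀ x y, r' (f x) (g y) ≤ r x y) (𝔵 : Ultrafilter α) (𝔶 : Ultrafilter β) :
    uExt r' (𝔵.map f) (𝔶.map g) ≤ uExt r 𝔵 𝔶 := by
  refine uExt_le fun A hA B hB => le_trans ?_
    (iInf_le_uExt r (Ultrafilter.mem_map.1 hA) (Ultrafilter.mem_map.1 hB))
  exact le_iInf₂ fun x hx => le_iInf₂ fun y hy =>
    (iInf₂_le (f x) hx).trans ((iInf₂_le (g y) hy).trans (h x y))

lemma uExt_map_self_le {r : β → α → ℝ≥0∞} {f : α → β} {𝔶 : Ultrafilter α}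
    {t : ℝ≥0∞} (h : ∀ᶠ y in (𝔶 : Filter α), r (f y) y ≤ t) : uExt r (𝔶.map f) 𝔶 ≤ t :=
  uExt_le fun _ hA _ hB => by
    obtain ⟨y, ⟨hyA, hyB⟩, hy⟩ :=
      Ultrafilter.nonempty_of_mem (inter_mem (inter_mem (Ultrafilter.mem_map.1 hA) hB) h)
    exact (iInf₂_le (f y) hyA).trans ((iInf₂_le y hyB).trans hy)

lemma uExt_pure_le {r : β → α → ℝ≥0∞} {𝔛 : Ultrafilter β} {y : α} {t : ℝ≥0∞}
    (h : ∀ᶠ 𝔞 in (𝔛 : Filter β), r 𝔞 y ≤ t) : uExt r 𝔛 (pure y) ≤ t :=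
  uExt_le fun _ hA _ (hB : y ∈ _) => by
    obtain ⟨𝔞, h𝔞A, h𝔞⟩ := Ultrafilter.nonempty_of_mem (inter_mem hA h)
    exact (iInf₂_le 𝔞 h𝔞A).trans ((iInf₂_le y hB).trans h𝔞)

end Numerical

section Convergences

variable {T V W X Y : Type*}

lemma IsContraction.comp {a : Ultrafilter X → X → ℝ≥0∞} {b : Ultrafilter Y → Y → ℝ≥0∞}
    {c : Ultrafilter V → V → ℝ≥0∞} {g : Y → V} {f : X → Y} (hg : IsContraction b c g)
    (hf : IsContraction a b f) : IsContraction a c (g ∘ f) := fun 𝔵 x => by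
  rw [← Ultrafilter.map_map]
  exact (hg _ _).trans (hf 𝔵 x)

lemma IsTransitiveConv.map_mU_le {r : Ultrafilter T → T → ℝ≥0∞} {r' : Ultrafilter V → V → ℝ≥0∞}
    (ht : IsTransitiveConv r') {e : T → V} (he : IsContraction r r' e)
    (𝔛 : Ultrafilter (Ultrafilter T)) (𝔱 : Ultrafilter T) (t : T) :
    r' ((mU 𝔛).map e) (e t) ≤ uExt r 𝔛 𝔱 + r 𝔱 t := by
  rw [← mU_map_map]
  exact (ht _ _ _).trans (add_le_add (uExt_map_map_le _ e he 𝔛 𝔱) (he 𝔱 t))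

lemma IsTransitiveConv.comap {r : Ultrafilter T → T → ℝ≥0∞} {r' : Ultrafilter V → V → ℝ≥0∞}
    (ht : IsTransitiveConv r') (e : T → V) (h : ∀ 𝔱 t, r 𝔱 t = r' (𝔱.map e) (e t)) :
    IsTransitiveConv r := fun 𝔛 𝔱 t =>
  (h _ t).trans_le (ht.map_mU_le (fun 𝔞 s => (h 𝔞 s).ge) 𝔛 𝔱 t)

def prodConv (c : Ultrafilter W → W → ℝ≥0∞) (a : Ultrafilter X → X → ℝ≥0∞) :
    Ultrafilter (W × X) → W × X → ℝ≥0∞ :=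
  fun 𝔴 p => max (c (𝔴.map Prod.fst) p.1) (a (𝔴.map Prod.snd) p.2)

variable {a : Ultrafilter X → X → ℝ≥0∞} {b : Ultrafilter Y → Y → ℝ≥0∞}
  {c : Ultrafilter W → W → ℝ≥0∞}

lemma isContraction_fst_prodConv : IsContraction (prodConv c a) c Prod.fst :=
  fun _ _ => le_max_left _ _

lemma isContraction_snd_prodConv : IsContraction (prodConv c a) a Prod.snd :=
  fun _ _ => le_max_right _ _

lemma isContraction_prodConv_iff {d : Ultrafilter V → V → ℝ≥0∞} {h : V → W × X} :
    IsContraction d (prodConv c a) h ↔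
      IsContraction d c (Prod.fst ∘ h) ∧ IsContraction d a (Prod.snd ∘ h) := by
  simp only [IsContraction, prodConv, max_le_iff, forall_and, Ultrafilter.map_map]
  rfl

lemma IsReflexiveConv.prodConv (hc : IsReflexiveConv c) (ha : IsReflexiveConv a) :
    IsReflexiveConv (prodConv c a) := fun p => by
  simp [_root_.prodConv, Ultrafilter.map_pure, hc p.1, ha p.2]

lemma IsTransitiveConv.prodConv (hc : IsTransitiveConv c) (ha : IsTransitiveConv a) :
    IsTransitiveConv (prodConv c a) := fun 𝔚 𝔴 p =>
  max_le (hc.map_mU_le isContraction_fst_prodConv 𝔚 𝔴 p)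
    (ha.map_mU_le isContraction_snd_prodConv 𝔚 𝔴 p)

abbrev ContrHom (a : Ultrafilter X → X → ℝ≥0∞) (b : Ultrafilter Y → Y → ℝ≥0∞) : Type _ :=
  {φ : X → Y // IsContraction a b φ}

def ContrHom.eval : ContrHom a b × X → Y := fun p => p.1.1 p.2

lemma ContrHom.map_eval_map_prodMap (g : W → ContrHom a b) (𝔮 : Ultrafilter (W × X)) :
    (𝔮.map (Prod.map g id)).map ContrHom.eval = 𝔮.map fun p => (g p.1).1 p.2 := by
  rw [Ultrafilter.map_map]
  rfl

/-- For `b = ennConv` this is `dExp a`, with `ξ` moved across the truncated subtraction. -/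
def expConv (a : Ultrafilter X → X → ℝ≥0∞) (b : Ultrafilter Y → Y → ℝ≥0∞) :
    Ultrafilter (ContrHom a b) → ContrHom a b → ℝ≥0∞ :=
  fun 𝔭 φ => sInf {u | ∀ 𝔮 : Ultrafilter (ContrHom a b × X), 𝔮.map Prod.fst = 𝔭 →
    ∀ x, b (𝔮.map ContrHom.eval) (φ.1 x) ≤ max u (a (𝔮.map Prod.snd) x)}

lemma expConv_le_iff {𝔭 : Ultrafilter (ContrHom a b)} {φ : ContrHom a b} {u : ℝ≥0∞} :
    expConv a b 𝔭 φ ≤ u ↔ ∀ 𝔮 : Ultrafilter (ContrHom a b × X), 𝔮.map Prod.fst = 𝔭 →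
      ∀ x, b (𝔮.map ContrHom.eval) (φ.1 x) ≤ max u (a (𝔮.map Prod.snd) x) := by
  refine ⟨fun h 𝔮 h𝔮 x => ?_, fun h => sInf_le h⟩
  refine le_trans ?_ (max_le_max h le_rfl)
  exact le_max_sInf fun _ hv => hv 𝔮 h𝔮 x

lemma le_max_expConv (𝔮 : Ultrafilter (ContrHom a b × X)) (φ : ContrHom a b) (x : X) :
    b (𝔮.map ContrHom.eval) (φ.1 x) ≤
      max (expConv a b (𝔮.map Prod.fst) φ) (a (𝔮.map Prod.snd) x) :=
  expConv_le_iff.1 le_rfl 𝔮 rfl x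

lemma isReflexiveConv_expConv : IsReflexiveConv (expConv a b) := fun φ =>
  nonpos_iff_eq_zero.1 <| expConv_le_iff.2 fun 𝔮 h𝔮 x => by
    have hφ : Prod.fst ⁻¹' {φ} ∈ 𝔮 := by
      rw [← Ultrafilter.mem_map, h𝔮]
      rfl
    have : 𝔮.map ContrHom.eval = (𝔮.map Prod.snd).map φ.1 := by
      rw [Ultrafilter.map_map]
      refine Ultrafilter.map_congr ?_
      filter_upwards [hφ] with p (hp : p.1 = φ)
      simp [ContrHom.eval, hp]
    rw [this]
    exact (φ.2 _ x).trans (le_max_right _ _)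

def ContrHom.postcomp {c : Ultrafilter V → V → ℝ≥0∞} {g : Y → V} (hg : IsContraction b c g)
    (φ : ContrHom a b) : ContrHom a c :=
  ⟨g ∘ φ.1, hg.comp φ.2⟩

lemma isContraction_postcomp {c : Ultrafilter V → V → ℝ≥0∞} {g : Y → V}
    (hg : IsContraction b c g) :
    IsContraction (expConv a b) (expConv a c) (ContrHom.postcomp (a := a) hg) := by
  intro 𝔭 φ
  refine expConv_le_iff.2 fun 𝔮 h𝔮 x => ?_
  obtain ⟨𝔯, h𝔯, rfl⟩ := Ultrafilter.exists_map_fst_eq_and_map_prodMap_eq _ 𝔭 𝔮 h𝔮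
  rw [ContrHom.map_eval_map_prodMap, Ultrafilter.map_snd_map_prodMap, ← h𝔯]
  have := hg (𝔯.map ContrHom.eval) (φ.1 x)
  rw [Ultrafilter.map_map] at this
  exact this.trans (le_max_expConv 𝔯 φ x)

end Convergences

section ExponentialLaw

variable {ι V W X Y : Type*} {a : Ultrafilter X → X → ℝ≥0∞} {b : Ultrafilter Y → Y → ℝ≥0∞}
  {c : Ultrafilter V → V → ℝ≥0∞}

lemma expConv_le_iSup {g : ι → Y → V} (hg : ∀ i, IsContraction b c (g i))
    (hb : ∀ 𝔶 y, b 𝔶 y ≤ ⨆ i, c (𝔶.map (g i)) (g i y))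
    (𝔭 : Ultrafilter (ContrHom a b)) (φ : ContrHom a b) :
    expConv a b 𝔭 φ ≤
      ⨆ i, expConv a c (𝔭.map (ContrHom.postcomp (hg i))) (ContrHom.postcomp (hg i) φ) := by
  refine expConv_le_iff.2 fun 𝔮 h𝔮 x => (hb _ _).trans (iSup_le fun i => ?_)
  have := le_max_expConv (𝔮.map (Prod.map (ContrHom.postcomp (hg i)) id))
    (ContrHom.postcomp (hg i) φ) x
  rw [ContrHom.map_eval_map_prodMap, Ultrafilter.map_fst_map_prodMap,
    Ultrafilter.map_snd_map_prodMap, h𝔮] at this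
  rw [Ultrafilter.map_map]
  exact this.trans (max_le_max (le_iSup_of_le i le_rfl) le_rfl)

/-- `hb` says that `b` is initial with respect to the contractions `g i`. -/
lemma IsTransitiveConv.expConv_of_le_iSup (ht : IsTransitiveConv (expConv a c)) {g : ι → Y → V}
    (hg : ∀ i, IsContraction b c (g i)) (hb : ∀ 𝔶 y, b 𝔶 y ≤ ⨆ i, c (𝔶.map (g i)) (g i y)) :
    IsTransitiveConv (expConv a b) := fun 𝔛 𝔭 φ =>
  (expConv_le_iSup hg hb _ φ).trans <| iSup_le fun i =>
    ht.map_mU_le (isContraction_postcomp (hg i)) 𝔛 𝔭 φ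

variable {c : Ultrafilter W → W → ℝ≥0∞}

def ContrHom.curry (hc : IsReflexiveConv c) {f : W × X → Y}
    (hf : IsContraction (prodConv c a) b f) (w : W) : ContrHom a b :=
  ⟨fun x => f (w, x), fun 𝔵 x => by
    have hfst : (𝔵.map (w, ·)).map Prod.fst = pure w := by
      rw [Ultrafilter.map_map]
      exact Ultrafilter.map_const_eq_pure 𝔵 w
    have hsnd : (𝔵.map (w, ·)).map Prod.snd = 𝔵 := by
      rw [Ultrafilter.map_map]
      exact Ultrafilter.map_id 𝔵
    have := hf (𝔵.map (w, ·)) (w, x)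
    rw [prodConv, hfst, hsnd, hc w, zero_max, Ultrafilter.map_map] at this
    exact this⟩

lemma isContraction_curry (hc : IsReflexiveConv c) {f : W × X → Y}
    (hf : IsContraction (prodConv c a) b f) :
    IsContraction c (expConv a b) (ContrHom.curry hc hf) := by
  intro 𝔴 w
  refine expConv_le_iff.2 fun 𝔮 h𝔮 x => ?_
  obtain ⟨𝔯, h𝔯, rfl⟩ := Ultrafilter.exists_map_fst_eq_and_map_prodMap_eq _ 𝔴 𝔮 h𝔮
  rw [ContrHom.map_eval_map_prodMap, Ultrafilter.map_snd_map_prodMap, ← h𝔯]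
  exact hf 𝔯 (w, x)

lemma isContraction_uncurry {g : W → ContrHom a b} (hg : IsContraction c (expConv a b) g) :
    IsContraction (prodConv c a) b (fun p => (g p.1).1 p.2) := by
  intro 𝔴 p
  have := le_max_expConv (𝔴.map (Prod.map g id)) (g p.1) p.2
  rw [ContrHom.map_eval_map_prodMap, Ultrafilter.map_fst_map_prodMap,
    Ultrafilter.map_snd_map_prodMap] at this
  exact this.trans (max_le_max (hg _ _) le_rfl)

end ExponentialLaw

section PointConv

variable {T : Type*}

open Classical in
def pointConv (𝔭 : Ultrafilter T) (t : T) (u : ℝ≥0∞) : Ultrafilter T → T → ℝ≥0∞ :=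
  fun 𝔯 s => if 𝔯 = pure s then 0 else if 𝔯 = 𝔭 ∧ s = t then u else ⊤

variable {𝔭 : Ultrafilter T} {t : T} {u : ℝ≥0∞}

lemma isReflexiveConv_pointConv : IsReflexiveConv (pointConv 𝔭 t u) := fun _ => by
  simp [pointConv]

lemma pointConv_self_le : pointConv 𝔭 t u 𝔭 t ≤ u := by
  unfold pointConv
  split_ifs <;> simp_all

lemma le_pointConv {r : Ultrafilter T → T → ℝ≥0∞} (hr : IsReflexiveConv r) (𝔯 : Ultrafilter T)
    (s : T) : r 𝔯 s ≤ pointConv 𝔭 t (r 𝔭 t) 𝔯 s := by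
  unfold pointConv
  split_ifs with h₁ h₂
  · rw [h₁, hr]
  · rw [h₂.1, h₂.2]
  · exact le_top

lemma eq_pure_or_eq_of_pointConv_lt_top {𝔯 : Ultrafilter T} {s : T}
    (h : pointConv 𝔭 t u 𝔯 s < ⊤) : 𝔯 = pure s ∨ 𝔯 = 𝔭 := by
  unfold pointConv at h
  split_ifs at h with h₁ h₂
  exacts [.inl h₁, .inr h₂.1, (lt_irrefl _ h).elim]

lemma eq_pure_or_mU_eq_of_uExt_pointConv_lt_top {𝔛 : Ultrafilter (Ultrafilter T)}
    {𝔶 : Ultrafilter T} (h : uExt (pointConv 𝔭 t u) 𝔛 𝔶 < ⊤) : 𝔛 = pure 𝔭 ∨ mU 𝔛 = 𝔶 := by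
  by_cases h𝔭 : {𝔭} ∈ 𝔛
  · exact .inl (Ultrafilter.eq_pure_of_singleton_mem h𝔭)
  refine .inr (Ultrafilter.eq_of_le fun B hB => ?_)
  have hB' : pure '' B ∪ {𝔭} ∈ 𝔛 := by
    by_contra hc
    obtain ⟨𝔯, h𝔯, s, hs, hlt⟩ :=
      exists_lt_of_uExt_lt h (Ultrafilter.compl_mem_iff_notMem.2 hc) hB
    exact h𝔯 ((eq_pure_or_eq_of_pointConv_lt_top hlt).imp (fun e => ⟨s, hs, e.symm⟩) id)
  change {𝔞 : Ultrafilter T | B ∈ 𝔞} ∈ 𝔛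
  filter_upwards [hB', Ultrafilter.compl_mem_iff_notMem.2 h𝔭] with 𝔯 h₁ h₂
  rcases h₁ with ⟨s, hs, rfl⟩ | h₁
  exacts [hs, (h₂ h₁).elim]

lemma isTransitiveConv_pointConv : IsTransitiveConv (pointConv 𝔭 t u) := by
  intro 𝔛 𝔶 s
  rcases eq_top_or_lt_top (uExt (pointConv 𝔭 t u) 𝔛 𝔶) with h | h
  · simp [h]
  rcases eq_pure_or_mU_eq_of_uExt_pointConv_lt_top h with rfl | h𝔛
  · rw [mU_pure]
    by_cases h𝔶 : 𝔶 = pure s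
    · subst h𝔶
      exact (le_uExt_pure_pure _ _ _).trans le_self_add
    by_cases h𝔭 : 𝔶 = 𝔭 ∧ s = t
    · rw [← h𝔭.1]
      exact le_add_self
    · simp [pointConv, h𝔶, h𝔭]
  · rw [h𝔛]
    exact le_add_self

end PointConv

section ApproachDistance

variable {T : Type*} {δ : Set T → T → ℝ≥0∞}

lemma le_appConv {A : Set T} {𝔵 : Ultrafilter T} (hA : A ∈ 𝔵) (x : T) :
    δ A x ≤ appConv δ 𝔵 x :=
  le_iSup₂ (f := fun A (_ : A ∈ 𝔵) => δ A x) A hA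

lemma appConv_le {𝔵 : Ultrafilter T} {x : T} {u : ℝ≥0∞} (h : ∀ A ∈ 𝔵, δ A x ≤ u) :
    appConv δ 𝔵 x ≤ u :=
  iSup₂_le h

namespace IsApproachDistance

lemma antitone (hδ : IsApproachDistance δ) {A B : Set T} (h : A ⊆ B) (x : T) :
    δ B x ≤ δ A x := by
  rw [← union_eq_self_of_subset_left h, hδ.dist_union]
  exact min_le_left _ _

lemma dist_eq_zero_of_mem (hδ : IsApproachDistance δ) {A : Set T} {x : T} (hx : x ∈ A) :
    δ A x = 0 :=
  nonpos_iff_eq_zero.1 <|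
    (hδ.antitone (singleton_subset_iff.2 hx) x).trans_eq (hδ.dist_singleton x)

lemma isReflexiveConv_appConv (hδ : IsApproachDistance δ) : IsReflexiveConv (appConv δ) :=
  fun _ => nonpos_iff_eq_zero.1 <| appConv_le fun _ hA => (hδ.dist_eq_zero_of_mem hA).le

lemma isTransitiveConv_appConv (hδ : IsApproachDistance δ) : IsTransitiveConv (appConv δ) := by
  intro 𝔛 𝔵 x
  refine appConv_le fun A hA => ?_
  refine le_add_of_forall_lt_le_add fun u hu => ?_
  have hAu : {y | δ A y ≤ u} ∈ 𝔵 := by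
    by_contra hc
    obtain ⟨𝔞, h𝔞, y, hy, hlt⟩ := exists_lt_of_uExt_lt hu (mem_mU.1 hA)
      (Ultrafilter.compl_mem_iff_notMem.2 hc)
    exact hy ((le_appConv h𝔞 y).trans hlt.le)
  calc δ A x ≤ δ {y | δ A y ≤ u} x + u := hδ.dist_closure A x u
    _ ≤ appConv δ 𝔵 x + u := add_le_add_left (le_appConv hAu x) _
    _ = u + appConv δ 𝔵 x := add_comm _ _

lemma isContraction_dist (hδ : IsApproachDistance δ) (A : Set T) :
    IsContraction (appConv δ) ennConv (δ A) := by
  intro 𝔷 z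
  rw [ennConv, tsub_le_iff_right, add_comm]
  refine le_add_of_forall_lt_le_add fun t ht => ?_
  have hAt : {y | δ A y ≤ t} ∈ 𝔷 := Ultrafilter.mem_map.1 (Iic_mem_of_xi_lt ht)
  calc δ A z ≤ δ {y | δ A y ≤ t} z + t := hδ.dist_closure A z t
    _ ≤ appConv δ 𝔷 z + t := add_le_add_left (le_appConv hAt z) t
    _ = t + appConv δ 𝔷 z := add_comm _ _

lemma appConv_le_iSup (hδ : IsApproachDistance δ) (𝔷 : Ultrafilter T) (z : T) :
    appConv δ 𝔷 z ≤ ⨆ A : Set T, ennConv (𝔷.map (δ A)) (δ A z) := by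
  refine appConv_le fun A hA => le_iSup_of_le A ?_
  have h𝔷 : 𝔷.map (δ A) = pure 0 := by
    rw [← Ultrafilter.map_const_eq_pure 𝔷]
    exact Ultrafilter.map_congr (Filter.mem_of_superset hA fun y hy => hδ.dist_eq_zero_of_mem hy)
  rw [ennConv, h𝔷, xi_pure, tsub_zero]

end IsApproachDistance

def distOf (c : Ultrafilter T → T → ℝ≥0∞) : Set T → T → ℝ≥0∞ :=
  fun A x => ⨅ (𝔶 : Ultrafilter T) (_ : A ∈ 𝔶), c 𝔶 x

variable {c : Ultrafilter T → T → ℝ≥0∞}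

lemma distOf_le {A : Set T} {𝔶 : Ultrafilter T} (hA : A ∈ 𝔶) (x : T) : distOf c A x ≤ c 𝔶 x :=
  iInf₂_le 𝔶 hA

lemma exists_of_distOf_lt {A : Set T} {x : T} {t : ℝ≥0∞} (h : distOf c A x < t) :
    ∃ 𝔶 : Ultrafilter T, A ∈ 𝔶 ∧ c 𝔶 x < t := by
  simpa only [distOf, iInf_lt_iff, exists_prop] using h

lemma isApproachDistance_distOf (hrefl : IsReflexiveConv c) (htrans : IsTransitiveConv c) :
    IsApproachDistance (distOf c) where
  dist_singleton x := nonpos_iff_eq_zero.1 <| (distOf_le rfl x).trans_eq (hrefl x)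
  dist_empty x := by simp [distOf]
  dist_union A B x := by
    simp [distOf, Ultrafilter.union_mem_iff, iInf_or, iInf_inf_eq]
  dist_closure A x ε := by
    -- glue, along an ultrafilter `𝔶` on the `ε`-neighbourhood of `A` converging to `x`,
    -- ultrafilters `𝔞 y ∋ A` converging to its points `y`, and apply transitivity
    refine le_add_of_forall_lt_le_add fun t₂ ht₂ => ?_
    rw [add_comm]
    refine le_add_of_forall_lt_le_add fun t₁ ht₁ => ?_
    obtain ⟨𝔶, h𝔶, h𝔶x⟩ := exists_of_distOf_lt ht₂
    have : Nonempty (Ultrafilter T) := ⟨pure x⟩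
    choose! 𝔞 h𝔞A h𝔞 using fun y (hy : distOf c A y < t₁) => exists_of_distOf_lt hy
    have hA : ∀ᶠ y in (𝔶 : Filter T), distOf c A y < t₁ :=
      Filter.mem_of_superset h𝔶 fun y (hy : distOf c A y ≤ ε) => hy.trans_lt ht₁
    have hA' : A ∈ mU (𝔶.map 𝔞) := hA.mono h𝔞A
    calc distOf c A x ≤ c (mU (𝔶.map 𝔞)) x := distOf_le hA' x
      _ ≤ uExt c (𝔶.map 𝔞) 𝔶 + c 𝔶 x := htrans _ _ _
      _ ≤ t₁ + t₂ := add_le_add (uExt_map_self_le (hA.mono fun y hy => (h𝔞 y hy).le)) h𝔶x.le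

lemma appConv_distOf (hrefl : IsReflexiveConv c) (htrans : IsTransitiveConv c) :
    appConv (distOf c) = c := by
  funext 𝔵 x
  refine le_antisymm (appConv_le fun A hA => distOf_le hA x) ?_
  refine le_of_forall_gt_imp_ge_of_dense fun u hu => ?_
  -- an ultrafilter of witnesses of `distOf c A x < u`, for all `A ∈ 𝔵`, has `mU 𝔛 = 𝔵`
  let 𝒴 : Set T → Set (Ultrafilter T) := fun A => {𝔶 | A ∈ 𝔶 ∧ c 𝔶 x ≤ u}
  have h𝒴 : Monotone 𝒴 := fun A B hAB 𝔶 h => ⟨mem_of_superset h.1 hAB, h.2⟩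
  have : ((𝔵 : Filter T).lift' 𝒴).NeBot := (Filter.lift'_neBot_iff h𝒴).2 fun A hA => by
    obtain ⟨𝔶, h𝔶A, h𝔶⟩ := exists_of_distOf_lt ((le_appConv hA x).trans_lt hu)
    exact ⟨𝔶, h𝔶A, h𝔶.le⟩
  let 𝔛 := Ultrafilter.of ((𝔵 : Filter T).lift' 𝒴)
  have h𝔛 : ∀ A ∈ 𝔵, 𝒴 A ∈ 𝔛 := fun A hA => Ultrafilter.of_le _ (Filter.mem_lift' hA)
  have hm : mU 𝔛 = 𝔵 :=
    Ultrafilter.eq_of_le fun A hA => mem_mU.2 (mem_of_superset (h𝔛 A hA) fun _ h => h.1)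
  calc c 𝔵 x = c (mU 𝔛) x := by rw [hm]
    _ ≤ uExt c 𝔛 (pure x) + c (pure x) x := htrans _ _ _
    _ ≤ u := by
      rw [hrefl, add_zero]
      exact uExt_pure_le (Filter.mem_of_superset (h𝔛 univ univ_mem) fun 𝔶 h => h.2)

end ApproachDistance

section Lambda

open Classical in
def distLam (A : Set ℝ≥0∞) (v : ℝ≥0∞) : ℝ≥0∞ :=
  if A = ∅ then ⊤ else v - sSup A

lemma distLam_of_ne {A : Set ℝ≥0∞} (hA : A ≠ ∅) (v : ℝ≥0∞) : distLam A v = v - sSup A :=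
  if_neg hA

lemma isApproachDistance_distLam : IsApproachDistance distLam where
  dist_singleton x := by simp [distLam]
  dist_empty x := by simp [distLam]
  dist_union A B x := by
    by_cases hA : A = ∅
    · simp [hA, distLam]
    by_cases hB : B = ∅
    · simp [hB, distLam]
    rw [distLam_of_ne hA, distLam_of_ne hB, distLam_of_ne (by simp [hA]), sSup_union]
    exact antitone_const_tsub.map_max
  dist_closure A x ε := by
    rcases eq_or_ne ε ⊤ with rfl | hε
    · simp
    by_cases hA : A = ∅
    · simp [distLam, hA, hε]
    have hsub : A ⊆ {y | distLam A y ≤ ε} := fun y hy => by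
      simp [distLam_of_ne hA, le_add_left (le_sSup hy)]
    have hne : {y | distLam A y ≤ ε} ≠ ∅ := fun h => hA (subset_empty_iff.1 (h ▸ hsub))
    have hsup : sSup {y | distLam A y ≤ ε} ≤ sSup A + ε := sSup_le fun y hy => by
      rw [mem_ofPred_eq, distLam_of_ne hA, tsub_le_iff_left] at hy
      exact hy
    rw [distLam_of_ne hA, distLam_of_ne hne]
    calc x - sSup A ≤ x - (sSup A + ε) + ε := by rw [tsub_add_eq_tsub_tsub]; exact le_tsub_add
      _ ≤ x - sSup {y | distLam A y ≤ ε} + ε := add_le_add_left (tsub_le_tsub_left hsup x) ε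

lemma iInf_sSup_eq_xi (𝔳 : Ultrafilter ℝ≥0∞) : ⨅ A ∈ 𝔳, sSup A = xi 𝔳 := by
  refine le_antisymm (le_of_forall_gt_imp_ge_of_dense fun s hs => ?_)
    (iSup₂_le fun B hB => le_iInf₂ fun A hA => ?_)
  · exact (iInf₂_le _ (Iic_mem_of_xi_lt hs)).trans (sSup_le fun _ hu => hu)
  · obtain ⟨u, huA, huB⟩ := Ultrafilter.nonempty_of_mem (inter_mem hA hB)
    exact (iInf₂_le u huB).trans (le_sSup huA)

lemma appConv_distLam : appConv distLam = ennConv := by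
  funext 𝔳 v
  calc appConv distLam 𝔳 v = ⨆ A ∈ 𝔳, v - sSup A :=
        iSup_congr fun A => iSup_congr fun hA =>
          distLam_of_ne (Ultrafilter.nonempty_of_mem hA).ne_empty v
    _ = v - ⨅ A ∈ 𝔳, sSup A := by simp only [ENNReal.sub_iInf]
    _ = ennConv 𝔳 v := by rw [iInf_sSup_eq_xi, ennConv]

end Lambda

namespace AppSpace

def ofConv (T : Type) (c : Ultrafilter T → T → ℝ≥0∞) (hrefl : IsReflexiveConv c)
    (htrans : IsTransitiveConv c) : AppSpace :=
  ⟨T, distOf c, isApproachDistance_distOf hrefl htrans⟩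

lemma appConv_ofConv (T : Type) (c : Ultrafilter T → T → ℝ≥0∞) (hrefl : IsReflexiveConv c)
    (htrans : IsTransitiveConv c) : appConv (ofConv T c hrefl htrans).dist = c :=
  appConv_distOf hrefl htrans

lemma isReflexiveConv (Z : AppSpace) : IsReflexiveConv (appConv Z.dist) :=
  Z.isApproachDistance.isReflexiveConv_appConv

lemma isTransitiveConv (Z : AppSpace) : IsTransitiveConv (appConv Z.dist) :=
  Z.isApproachDistance.isTransitiveConv_appConv

lemma hom_ext {Z W : AppSpace} {f g : Z ⟶ W} (h : f.1 = g.1) : f = g :=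
  Subtype.ext h

def ennreal : AppSpace :=
  ⟨ℝ≥0∞, distLam, isApproachDistance_distLam⟩

lemma appConv_ennreal : appConv ennreal.dist = ennConv :=
  appConv_distLam

def unit : AppSpace :=
  ofConv PUnit (fun _ _ => 0) (fun _ => rfl) (fun _ _ _ => zero_le)

def pointHom (Z : AppSpace) (z : Z.carrier) : unit ⟶ Z :=
  ⟨fun _ => z, fun 𝔲 _ => by
    rw [Ultrafilter.map_const_eq_pure, Z.isReflexiveConv]
    exact zero_le⟩

variable (Z X : AppSpace)

def prod : AppSpace :=
  ofConv (Z.carrier × X.carrier) (prodConv (appConv Z.dist) (appConv X.dist))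
    (Z.isReflexiveConv.prodConv X.isReflexiveConv) (Z.isTransitiveConv.prodConv X.isTransitiveConv)

lemma appConv_prod : appConv (prod Z X).dist = prodConv (appConv Z.dist) (appConv X.dist) :=
  appConv_ofConv _ _ _ _

def fst : prod Z X ⟶ Z :=
  ⟨Prod.fst, by rw [appConv_prod]; exact isContraction_fst_prodConv⟩

def snd : prod Z X ⟶ X :=
  ⟨Prod.snd, by rw [appConv_prod]; exact isContraction_snd_prodConv⟩

variable {Z X}

lemma isContraction_prodConv_of_hom {Y : AppSpace} (f : prod Z X ⟶ Y) :
    IsContraction (prodConv (appConv Z.dist) (appConv X.dist)) (appConv Y.dist) f.1 :=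
  fun 𝔴 p => (f.2 𝔴 p).trans_eq (congr_fun₂ (appConv_prod Z X) 𝔴 p)

def prodLift {W : AppSpace} (f : W ⟶ Z) (g : W ⟶ X) : W ⟶ prod Z X :=
  ⟨fun w => (f.1 w, g.1 w), by rw [appConv_prod]; exact isContraction_prodConv_iff.2 ⟨f.2, g.2⟩⟩

@[simp]
lemma prodLift_fst {W : AppSpace} (f : W ⟶ Z) (g : W ⟶ X) : prodLift f g ≫ fst Z X = f :=
  rfl

@[simp]
lemma prodLift_snd {W : AppSpace} (f : W ⟶ Z) (g : W ⟶ X) : prodLift f g ≫ snd Z X = g :=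
  rfl

lemma prod_hom_ext {W : AppSpace} {f g : W ⟶ prod Z X} (h₁ : f ≫ fst Z X = g ≫ fst Z X)
    (h₂ : f ≫ snd Z X = g ≫ snd Z X) : f = g :=
  hom_ext <| funext fun w =>
    Prod.ext (congrFun (congrArg Subtype.val h₁) w) (congrFun (congrArg Subtype.val h₂) w)

variable (Z X) in
lemma isProductCone_prod : IsProductCone (fst Z X) (snd Z X) := fun _ f g =>
  ⟨prodLift f g, ⟨rfl, rfl⟩, fun _ h => prod_hom_ext (h.1.trans rfl) (h.2.trans rfl)⟩

def IsProductCone.isoProd {P : AppSpace} {p : P ⟶ Z} {q : P ⟶ X} (h : IsProductCone p q) :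
    P ≅ prod Z X where
  hom := prodLift p q
  inv := (h _ (fst Z X) (snd Z X)).exists.choose
  hom_inv_id := by
    obtain ⟨hp, hq⟩ := (h _ (fst Z X) (snd Z X)).exists.choose_spec
    exact (h P p q).unique ⟨by simp [hp], by simp [hq]⟩ ⟨Category.id_comp p, Category.id_comp q⟩
  inv_hom_id := by
    obtain ⟨hp, hq⟩ := (h _ (fst Z X) (snd Z X)).exists.choose_spec
    exact prod_hom_ext (by simp [hp]) (by simp [hq])

variable (X) in
def prodFunctor : AppSpace ⥤ AppSpace where
  obj Z := prod Z X
  map f := prodLift (fst _ X ≫ f) (snd _ X)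

lemma appExponentiable_iff_isLeftAdjoint :
    AppExponentiable X ↔ (prodFunctor X).IsLeftAdjoint := by
  constructor
  · rintro ⟨F, R, adj, p, q, hcone, hnat⟩
    let iso : F ≅ prodFunctor X := NatIso.ofComponents (fun Z => IsProductCone.isoProd (hcone Z))
      fun f => hom_ext <| funext fun w =>
        Prod.ext (congrArg (·.1 w) (hnat _ _ f).1) (congrArg (·.1 w) (hnat _ _ f).2)
    exact ⟨R, ⟨adj.ofNatIsoLeft iso⟩⟩
  · rintro ⟨R, ⟨adj⟩⟩
    exact ⟨prodFunctor X, R, adj, (fst · X), (snd · X), (isProductCone_prod · X),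
      fun _ _ _ => ⟨rfl, rfl⟩⟩

section Exponential

variable {X : AppSpace}

lemma isTransitiveConv_expConv_of_ennConv (ht : IsTransitiveConv (expConv (appConv X.dist) ennConv))
    (Z : AppSpace) : IsTransitiveConv (expConv (appConv X.dist) (appConv Z.dist)) :=
  ht.expConv_of_le_iSup Z.isApproachDistance.isContraction_dist
    Z.isApproachDistance.appConv_le_iSup

variable (ht : IsTransitiveConv (expConv (appConv X.dist) ennConv))

def exp (Z : AppSpace) : AppSpace :=
  ofConv (ContrHom (appConv X.dist) (appConv Z.dist)) (expConv _ _) isReflexiveConv_expConv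
    (isTransitiveConv_expConv_of_ennConv ht Z)

lemma appConv_exp (Z : AppSpace) :
    appConv (exp ht Z).dist = expConv (appConv X.dist) (appConv Z.dist) :=
  appConv_ofConv _ _ _ _

def expFunctor : AppSpace ⥤ AppSpace where
  obj Z := exp ht Z
  map g := ⟨ContrHom.postcomp g.2, by
    rw [appConv_exp, appConv_exp]
    exact isContraction_postcomp g.2⟩

def curryHom {Z' Z : AppSpace} (f : prod Z' X ⟶ Z) : Z' ⟶ exp ht Z :=
  ⟨ContrHom.curry Z'.isReflexiveConv (isContraction_prodConv_of_hom f), by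
    rw [appConv_exp]
    exact isContraction_curry _ _⟩

def uncurryHom {Z' Z : AppSpace} (g : Z' ⟶ exp ht Z) : prod Z' X ⟶ Z :=
  have hg : IsContraction (appConv Z'.dist) (expConv (appConv X.dist) (appConv Z.dist)) g.1 :=
    appConv_exp ht Z ▸ g.2
  ⟨fun p => (g.1 p.1).1 p.2, by
    rw [appConv_prod]
    exact isContraction_uncurry hg⟩

def expAdjunction : prodFunctor X ⊣ expFunctor ht :=
  Adjunction.mkOfHomEquiv
    { homEquiv _ _ :=
        { toFun := curryHom ht
          invFun := uncurryHom ht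
          left_inv _ := rfl
          right_inv _ := rfl }
      homEquiv_naturality_left_symm _ _ := rfl
      homEquiv_naturality_right _ _ := rfl }

end Exponential

lemma isLeftAdjoint_prodFunctor_of_isTransitiveConv (X : AppSpace)
    (ht : IsTransitiveConv (expConv (appConv X.dist) ennConv)) : (prodFunctor X).IsLeftAdjoint :=
  ⟨_, ⟨expAdjunction ht⟩⟩

section Adjunction

variable {X : AppSpace} {R : AppSpace ⥤ AppSpace} (adj : prodFunctor X ⊣ R) (Z : AppSpace)

def counitCurry : (R.obj Z).carrier → ContrHom (appConv X.dist) (appConv Z.dist) :=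
  ContrHom.curry (R.obj Z).isReflexiveConv (isContraction_prodConv_of_hom (adj.counit.app Z))

lemma isContraction_counitCurry :
    IsContraction (appConv (R.obj Z).dist) (expConv _ _) (counitCurry adj Z) :=
  isContraction_curry _ _

lemma homEquiv_symm_apply {Z' : AppSpace} (g : Z' ⟶ R.obj Z) (z' : Z'.carrier) (x : X.carrier) :
    ((adj.homEquiv Z' Z).symm g).1 (z', x) = (counitCurry adj Z (g.1 z')).1 x := by
  rw [adj.homEquiv_counit]
  rfl

lemma counitCurry_injective : Function.Injective (counitCurry adj Z) := by
  intro e e' h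
  have : pointHom _ e = pointHom _ e' := (adj.homEquiv unit Z).symm.injective <|
    hom_ext <| funext fun ⟨_, x⟩ => by
      rw [homEquiv_symm_apply, homEquiv_symm_apply]
      exact congrArg (·.1 x) h
  exact congrArg (·.1 PUnit.unit) this

lemma exists_section_counitCurry (𝔭 : Ultrafilter (ContrHom (appConv X.dist) (appConv Z.dist)))
    (φ : ContrHom (appConv X.dist) (appConv Z.dist)) :
    ∃ k : ofConv _ (pointConv 𝔭 φ (expConv _ _ 𝔭 φ)) isReflexiveConv_pointConv
        isTransitiveConv_pointConv ⟶ R.obj Z,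
      ∀ ψ, counitCurry adj Z (k.1 ψ) = ψ := by
  have hid : IsContraction (pointConv 𝔭 φ (expConv _ _ 𝔭 φ)) (expConv _ _) id := fun 𝔯 ψ => by
    rw [Ultrafilter.map_id]
    exact le_pointConv isReflexiveConv_expConv 𝔯 ψ
  let ev : prod (ofConv _ _ isReflexiveConv_pointConv isTransitiveConv_pointConv) X ⟶ Z :=
    ⟨fun p : ContrHom _ _ × X.carrier => p.1.1 p.2, by
      rw [appConv_prod, appConv_ofConv]
      exact isContraction_uncurry hid⟩
  refine ⟨adj.homEquiv _ _ ev, fun ψ => Subtype.ext <| funext fun x => ?_⟩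
  rw [← homEquiv_symm_apply adj Z _ ψ x]
  exact congrArg (·.1 (ψ, x)) ((adj.homEquiv _ Z).symm_apply_apply ev)

end Adjunction

lemma isTransitiveConv_expConv_of_adjunction {X : AppSpace} {R : AppSpace ⥤ AppSpace}
    (adj : prodFunctor X ⊣ R) (Z : AppSpace) :
    IsTransitiveConv (expConv (appConv X.dist) (appConv Z.dist)) := by
  have hsurj : Function.Surjective (counitCurry adj Z) := fun ψ =>
    let ⟨k, hk⟩ := exists_section_counitCurry adj Z (pure ψ) ψ
    ⟨k.1 ψ, hk ψ⟩
  let e := Equiv.ofBijective _ ⟨counitCurry_injective adj Z, hsurj⟩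
  refine (R.obj Z).isTransitiveConv.comap e.symm fun 𝔭 φ => le_antisymm ?_ ?_
  · have h := isContraction_counitCurry adj Z (𝔭.map e.symm) (e.symm φ)
    rwa [Ultrafilter.map_map, show counitCurry adj Z ∘ e.symm = id from funext e.apply_symm_apply,
      Ultrafilter.map_id, show counitCurry adj Z (e.symm φ) = φ from e.apply_symm_apply φ] at h
  · obtain ⟨k, hk⟩ := exists_section_counitCurry adj Z 𝔭 φ
    have hke : k.1 = e.symm :=
      funext fun ψ => e.injective ((hk ψ).trans (e.apply_symm_apply ψ).symm)
    have h := k.2 𝔭 φ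
    rw [hke, appConv_ofConv] at h
    exact h.trans pointConv_self_le

end AppSpace

lemma dExp_eq_expConv {X : Type*} (a : Ultrafilter X → X → ℝ≥0∞) : dExp a = expConv a ennConv := by
  funext 𝔭 φ
  refine congrArg sInf (Set.ext fun u => forall_congr' fun 𝔮 => forall_congr' fun _ =>
    forall_congr' fun x => tsub_le_iff_right.symm)

lemma isTransitiveConv_dExp_iff {X : Type*} (a : Ultrafilter X → X → ℝ≥0∞) :
    IsTransitiveConv (dExp a) ↔ IsTransitiveConv (expConv a ennConv) := by
  rw [dExp_eq_expConv]
  exact Iff.rfl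

/-- An approach space `(X, δ)` with ultrafilter convergence `a` is exponentiable
in `App` if and only if the exponential convergence `d` on `[0,∞]^X` is transitive (so that
`[0,∞]^X` with `d` is itself an approach space). -/
theorem exponentiable_iff_dExp_transitive (X : Type) (δ : Set X → X → ℝ≥0∞)
    (hδ : IsApproachDistance δ)
    (a : Ultrafilter X → X → ℝ≥0∞) (ha : ∀ (𝔵 : Ultrafilter X) (x : X), a 𝔵 x = ⨆ A ∈ 𝔵, δ A x) :
    AppExponentiable ⟨X, δ, hδ⟩ ↔ IsTransitiveConv (dExp a) := by
  obtain rfl : a = appConv δ := funext fun 𝔵 => funext (ha 𝔵)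
  rw [isTransitiveConv_dExp_iff, AppSpace.appExponentiable_iff_isLeftAdjoint]
  constructor
  · rintro ⟨R, ⟨adj⟩⟩
    have h := AppSpace.isTransitiveConv_expConv_of_adjunction adj AppSpace.ennreal
    rwa [AppSpace.appConv_ennreal] at h
  · exact AppSpace.isLeftAdjoint_prodFunctor_of_isTransitiveConv ⟨X, δ, hδ⟩

end
end

section
/- Let X be a set with a reflexive and transitive convergence a : U X ⇸ X, let u, v ∈ ℝ≥0∞ and let 𝔛 ∈ U(U X). Then the map φ_{u,v} : X → ℝ≥0∞ defined by φ_{u,v}(x) = ⨅_{𝔵 ∈ U X} ( max u (a 𝔵 x) + max v (Ū a 𝔛 𝔵) ) is a contraction into [0,∞]: for all 𝔷 ∈ U X and x ∈ X, a 𝔷 x ≥ φ_{u,v}(x) ⊖ ξ (U φ_{u,v} 𝔷). -/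
open scoped ENNReal
open CategoryTheory

noncomputable section

/-! Fix `ε > 0` and choose for every `y` a near-minimiser `g y` of the infimum defining `φ y`.
Testing `φ x` against `𝔵 = m_X (U g 𝔷)`, transitivity bounds `a 𝔵 x` by `a 𝔷 x` plus the
`𝔷`-limit of `a (g y) y`, and `Ū a 𝔛 𝔵` is bounded by the `𝔷`-limit of `Ū a 𝔛 (g y)`. Adding up,
`φ x ≤ a 𝔷 x + lim_𝔷 φ + ε`, and `ξ (U φ 𝔷)` is exactly this limit `liminf φ 𝔷`. -/

open Filter

lemma xi_map_eq_liminf {X : Type*} (f : X → ℝ≥0∞) (𝔷 : Ultrafilter X) :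
    xi (Ultrafilter.map f 𝔷) = liminf f 𝔷 := by
  rw [liminf_eq_iSup_iInf]
  apply le_antisymm
  · refine iSup₂_le fun A hA => le_iSup₂_of_le _ (Ultrafilter.mem_map.mp hA) ?_
    exact le_iInf₂ fun y hy => biInf_le _ hy
  · refine iSup₂_le fun B hB => le_iSup₂_of_le (f '' B)
      (Ultrafilter.mem_map.mpr (mem_of_superset hB (Set.subset_preimage_image f B))) ?_
    rw [iInf_image]

lemma uExt_map_le_liminf {α β : Type*} (r : α → β → ℝ≥0∞) (g : β → α) (𝔷 : Ultrafilter β) :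
    uExt r (Ultrafilter.map g 𝔷) 𝔷 ≤ liminf (fun y => r (g y) y) 𝔷 := by
  rw [liminf_eq_iSup_iInf]
  refine iSup₂_le fun A hA => iSup₂_le fun B hB => ?_
  refine le_iSup₂_of_le _ (inter_mem (Ultrafilter.mem_map.mp hA) hB) ?_
  exact le_iInf₂ fun y hy => (biInf_le (fun x => ⨅ y ∈ B, r x y) hy.1).trans (biInf_le _ hy.2)

lemma uExt_mU_map_le_liminf {α β X : Type*} (r : α → X → ℝ≥0∞) (𝔄 : Ultrafilter α)
    (g : β → Ultrafilter X) (𝔷 : Ultrafilter β) :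
    uExt r 𝔄 (mU (Ultrafilter.map g 𝔷)) ≤ liminf (fun y => uExt r 𝔄 (g y)) 𝔷 := by
  rw [liminf_eq_iSup_iInf]
  refine iSup₂_le fun A hA => iSup₂_le fun B hB => le_iSup₂_of_le {y | B ∈ g y} hB ?_
  exact le_iInf₂ fun y hy => le_iSup₂_of_le A hA (le_iSup₂_of_le B hy le_rfl)

lemma IsTransitiveConv.apply_mU_map_le {X : Type*} {a : Ultrafilter X → X → ℝ≥0∞}
    (htrans : IsTransitiveConv a) (g : X → Ultrafilter X) (𝔷 : Ultrafilter X) (x : X) :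
    a (mU (Ultrafilter.map g 𝔷)) x ≤ liminf (fun y => a (g y) y) 𝔷 + a 𝔷 x :=
  (htrans _ 𝔷 x).trans (add_le_add (uExt_map_le_liminf a g 𝔷) le_rfl)

lemma max_liminf_le_liminf_max {ι α : Type*} [CompleteLinearOrder α] {F : Filter ι} [NeBot F]
    (c : α) (f : ι → α) :
    max c (liminf f F) ≤ liminf (fun i => max c (f i)) F :=
  max_le (le_liminf_of_le (by isBoundedDefault) (Eventually.of_forall fun _ => le_max_left _ _))
    (liminf_le_liminf (Eventually.of_forall fun _ => le_max_right _ _))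

namespace ENNReal

lemma liminf_add_liminf_le {ι : Type*} (F : Filter ι) (f g : ι → ℝ≥0∞) :
    liminf f F + liminf g F ≤ liminf (f + g) F := by
  simp only [liminf_eq_iSup_iInf]
  refine biSup_add_biSup_le ⟨_, univ_mem⟩ ⟨_, univ_mem⟩ fun s hs t ht => ?_
  refine le_iSup₂_of_le (s ∩ t) (inter_mem hs ht) (le_iInf₂ fun i hi => ?_)
  exact add_le_add (biInf_le _ hi.1) (biInf_le _ hi.2)

lemma exists_le_iInf_add {ι : Type*} [Nonempty ι] (f : ι → ℝ≥0∞) {ε : ℝ≥0∞} (hε : ε ≠ 0) :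
    ∃ i, f i ≤ (⨅ j, f j) + ε := by
  rcases eq_or_ne (⨅ j, f j) ∞ with h | h
  · exact ⟨Classical.arbitrary ι, by simp [h]⟩
  · obtain ⟨i, hi⟩ := iInf_lt_iff.mp (lt_add_right h hε)
    exact ⟨i, hi.le⟩

end ENNReal

theorem phi_u_v_isContraction_general (X : Type*) (a : Ultrafilter X → X → ℝ≥0∞)
    (htrans : IsTransitiveConv a)
    (u v : ℝ≥0∞) (𝔛 : Ultrafilter (Ultrafilter X)) (φ : X → ℝ≥0∞)
    (hφ : ∀ x : X, φ x = ⨅ 𝔵 : Ultrafilter X, (max u (a 𝔵 x) + max v (uExt a 𝔛 𝔵))) :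
    ∀ (𝔷 : Ultrafilter X) (x : X), φ x - xi (Ultrafilter.map φ 𝔷) ≤ a 𝔷 x := by
  intro 𝔷 x
  rw [tsub_le_iff_right, xi_map_eq_liminf]
  refine ENNReal.le_of_forall_pos_le_add fun ε hε _ => ?_
  have : Nonempty X := ⟨x⟩
  choose g hg using fun y => ENNReal.exists_le_iInf_add
    (fun 𝔶 => max u (a 𝔶 y) + max v (uExt a 𝔛 𝔶)) (ENNReal.coe_ne_zero.mpr hε.ne')
  simp only [← hφ] at hg
  set 𝔵 := mU (Ultrafilter.map g 𝔷)
  calc φ x ≤ max u (a 𝔵 x) + max v (uExt a 𝔛 𝔵) := hφ x ▸ iInf_le _ 𝔵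
    _ ≤ max u (liminf (fun y => a (g y) y) 𝔷 + a 𝔷 x)
          + max v (liminf (fun y => uExt a 𝔛 (g y)) 𝔷) := by
        gcongr
        exacts [htrans.apply_mU_map_le g 𝔷 x, uExt_mU_map_le_liminf a 𝔛 g 𝔷]
    _ ≤ a 𝔷 x + (max u (liminf (fun y => a (g y) y) 𝔷)
          + max v (liminf (fun y => uExt a 𝔛 (g y)) 𝔷)) := by
        have hmax (s t : ℝ≥0∞) : max u (s + t) ≤ max u s + t :=
          (max_le_max le_self_add le_rfl).trans_eq (max_add_add_right _ _ _)
        grw [hmax]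
        exact (add_right_comm _ _ _).trans_le (add_comm _ _).le
    _ ≤ a 𝔷 x + liminf (fun y => φ y + ε) 𝔷 := by
        grw [max_liminf_le_liminf_max, max_liminf_le_liminf_max, ENNReal.liminf_add_liminf_le]
        exact add_le_add le_rfl (liminf_le_liminf (Eventually.of_forall hg))
    _ = a 𝔷 x + liminf φ 𝔷 + ε := by
        rw [liminf_add_const _ _ _ (by isBoundedDefault) (by isBoundedDefault), add_assoc]

/-- For a reflexive and transitive convergence `a : U X ⇸ X`, `u v ∈ [0,∞]`
and `𝔛 ∈ U (U X)`, the map `φ_{u,v}(x) = ⨅_{𝔵 ∈ U X} ((u ∨ a 𝔵 x) + (v ∨ Ū a 𝔛 𝔵))` is a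
contraction into `[0,∞]`. -/
theorem phi_u_v_isContraction (X : Type*) (a : Ultrafilter X → X → ℝ≥0∞)
    (hrefl : IsReflexiveConv a) (htrans : IsTransitiveConv a)
    (u v : ℝ≥0∞) (𝔛 : Ultrafilter (Ultrafilter X)) (φ : X → ℝ≥0∞)
    (hφ : ∀ x : X, φ x = ⨅ 𝔵 : Ultrafilter X, (max u (a 𝔵 x) + max v (uExt a 𝔛 𝔵))) :
    ∀ (𝔷 : Ultrafilter X) (x : X), φ x - xi (Ultrafilter.map φ 𝔷) ≤ a 𝔷 x :=
  phi_u_v_isContraction_general X a htrans u v 𝔛 φ hφ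

end
end
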